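/- Let k be a field of characteristic 2, G = ℤ/nℤ with 2 | n and generator g, and H = T(V) # kG with a·g = a, b·g = a+b, a and b (g,1)-skew-primitive. Then no nonzero linear combination λ·ba + μ·ab + ν·b² (λ, μ, ν ∈ k) is (g²,1)-skew-primitive in H; i.e., Δ(x) = x⊗1 + g²⊗x with x = λba + μab + νb² forces λ = μ = ν = 0. -/

import Mathlib

noncomputable section

open TensorProduct

variable (k : Type*) [Field k]

def gF : FreeAlgebra k (Fin 3) := FreeAlgebra.ι k 0

def aF : FreeAlgebra k (Fin 3) := FreeAlgebra.ι k 1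

def bF : FreeAlgebra k (Fin 3) := FreeAlgebra.ι k 2

/-- Relations of the smash product `T(V) # kG`, where `V = span(a,b)` with
`a·g = a`, `b·g = a + b`: namely `g^n = 1`, `ag = ga`, `bg = ga + gb`. -/
def relH (n : ℕ) : FreeAlgebra k (Fin 3) → FreeAlgebra k (Fin 3) → Prop :=
  fun x y =>
    (x = (gF k) ^ n ∧ y = 1) ∨
    (x = aF k * gF k ∧ y = gF k * aF k) ∨
    (x = bF k * gF k ∧ y = gF k * aF k + gF k * bF k)

/-- The smash product algebra `H₀ = T(V) # kG`. -/
abbrev H (n : ℕ) := RingQuot (relH k n)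

def gH (n : ℕ) : H k n := RingQuot.mkAlgHom k (relH k n) (gF k)

def aH (n : ℕ) : H k n := RingQuot.mkAlgHom k (relH k n) (aF k)

def bH (n : ℕ) : H k n := RingQuot.mkAlgHom k (relH k n) (bF k)

/-! Expanding `Δ` multiplicatively gives
`Δ x - x ⊗ 1 - g² ⊗ x = (λ + μ + ν) ga ⊗ b + (λ + μ) gb ⊗ a + λ ga ⊗ a`, so it suffices that
these three tensors are linearly independent. This is detected by the representation
`g ↦ [[1,1],[0,1]]`, `a ↦ 1`, `b ↦ [[0,0],[1,1]]` of `H` on `k²`, which respects `bg = ga + gb`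
because `char k = 2` and `gⁿ = 1` because `n` is even: products of matrix coefficients separate
the images of the three tensors. -/

section

variable {k} {n : ℕ}

/-- `H k n` is a quotient of the semiring `FreeAlgebra k (Fin 3)`, so unification does not find
`RingQuot.instRing`; without it `H k n ⊗[k] H k n` gets no additive cancellation instances. -/
instance : Ring (H k n) := RingQuot.instRing _

theorem aH_mul_gH : aH k n * gH k n = gH k n * aH k n := by
  simp only [aH, gH, ← map_mul]
  exact RingQuot.mkAlgHom_rel k (Or.inr (Or.inl ⟨rfl, rfl⟩))

theorem bH_mul_gH : bH k n * gH k n = gH k n * aH k n + gH k n * bH k n := by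
  simp only [aH, bH, gH, ← map_mul, ← map_add]
  exact RingQuot.mkAlgHom_rel k (Or.inr (Or.inr ⟨rfl, rfl⟩))

theorem coproduct_bH_mul_aH {Δ : H k n →ₐ[k] H k n ⊗[k] H k n}
    (ha : Δ (aH k n) = aH k n ⊗ₜ 1 + gH k n ⊗ₜ aH k n)
    (hb : Δ (bH k n) = bH k n ⊗ₜ 1 + gH k n ⊗ₜ bH k n) :
    Δ (bH k n * aH k n) = (bH k n * aH k n) ⊗ₜ 1 + (gH k n ^ 2) ⊗ₜ (bH k n * aH k n) +
      (gH k n * aH k n) ⊗ₜ bH k n + (gH k n * bH k n) ⊗ₜ aH k n +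
      (gH k n * aH k n) ⊗ₜ aH k n := by
  simp only [map_mul, ha, hb, mul_add, add_mul, Algebra.TensorProduct.tmul_mul_tmul, one_mul,
    mul_one, bH_mul_gH, add_tmul, pow_two]
  abel

theorem coproduct_aH_mul_bH {Δ : H k n →ₐ[k] H k n ⊗[k] H k n}
    (ha : Δ (aH k n) = aH k n ⊗ₜ 1 + gH k n ⊗ₜ aH k n)
    (hb : Δ (bH k n) = bH k n ⊗ₜ 1 + gH k n ⊗ₜ bH k n) :
    Δ (aH k n * bH k n) = (aH k n * bH k n) ⊗ₜ 1 + (gH k n ^ 2) ⊗ₜ (aH k n * bH k n) +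
      (gH k n * aH k n) ⊗ₜ bH k n + (gH k n * bH k n) ⊗ₜ aH k n := by
  simp only [map_mul, ha, hb, mul_add, add_mul, Algebra.TensorProduct.tmul_mul_tmul, one_mul,
    mul_one, aH_mul_gH, pow_two]
  abel

theorem coproduct_bH_sq [CharP k 2] {Δ : H k n →ₐ[k] H k n ⊗[k] H k n}
    (hb : Δ (bH k n) = bH k n ⊗ₜ 1 + gH k n ⊗ₜ bH k n) :
    Δ (bH k n ^ 2) = (bH k n ^ 2) ⊗ₜ 1 + (gH k n ^ 2) ⊗ₜ (bH k n ^ 2) +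
      (gH k n * aH k n) ⊗ₜ bH k n := by
  simp only [pow_two, map_mul, hb, mul_add, add_mul, Algebra.TensorProduct.tmul_mul_tmul,
    one_mul, mul_one, bH_mul_gH, add_tmul]
  have h2 : (gH k n * bH k n) ⊗ₜ[k] bH k n + (gH k n * bH k n) ⊗ₜ[k] bH k n = 0 := by
    rw [← two_smul k, CharTwo.two_eq_zero, zero_smul]
  rw [← sub_eq_zero, ← h2]
  abel

def gMat : Matrix (Fin 2) (Fin 2) k := !![1, 1; 0, 1]

def bMat : Matrix (Fin 2) (Fin 2) k := !![0, 0; 1, 1]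

def matrixGens : Fin 3 → Matrix (Fin 2) (Fin 2) k := ![gMat, 1, bMat]

theorem gMat_mul_self [CharP k 2] : gMat * gMat = (1 : Matrix (Fin 2) (Fin 2) k) := by
  ext i j
  fin_cases i <;> fin_cases j <;> simp [gMat, Matrix.mul_apply, CharTwo.add_self_eq_zero]

theorem bMat_mul_gMat [CharP k 2] :
    bMat * gMat = gMat + gMat * (bMat : Matrix (Fin 2) (Fin 2) k) := by
  ext i j
  fin_cases i <;> fin_cases j <;> simp [gMat, bMat, Matrix.mul_apply, CharTwo.add_self_eq_zero]

theorem lift_matrixGens_eq_of_relH [CharP k 2] (h2n : 2 ∣ n) {x y : FreeAlgebra k (Fin 3)}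
    (h : relH k n x y) :
    FreeAlgebra.lift k (matrixGens (k := k)) x = FreeAlgebra.lift k (matrixGens (k := k)) y := by
  rcases h with ⟨rfl, rfl⟩ | ⟨rfl, rfl⟩ | ⟨rfl, rfl⟩
  · obtain ⟨m, rfl⟩ := h2n
    simp [matrixGens, gF, pow_mul, sq, gMat_mul_self]
  · simp [matrixGens, gF, aF]
  · simp [matrixGens, gF, aF, bF, bMat_mul_gMat]

def matrixRep [CharP k 2] (h2n : 2 ∣ n) : H k n →ₐ[k] Matrix (Fin 2) (Fin 2) k :=
  RingQuot.liftAlgHom k ⟨_, fun _ _ => lift_matrixGens_eq_of_relH h2n⟩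

section MatrixRep

variable [CharP k 2]

@[simp] theorem matrixRep_gH (h2n : 2 ∣ n) : matrixRep h2n (gH k n) = gMat := by
  simp [matrixRep, matrixGens, gH, gF]

@[simp] theorem matrixRep_aH (h2n : 2 ∣ n) : matrixRep h2n (aH k n) = 1 := by
  simp [matrixRep, matrixGens, aH, aF]

@[simp] theorem matrixRep_bH (h2n : 2 ∣ n) : matrixRep h2n (bH k n) = bMat := by
  simp [matrixRep, matrixGens, bH, bF]

theorem linearIndependent_gH_mul_tmul (h2n : 2 ∣ n) :
    LinearIndependent k ![(gH k n * aH k n) ⊗ₜ[k] bH k n, (gH k n * bH k n) ⊗ₜ[k] aH k n,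
      (gH k n * aH k n) ⊗ₜ[k] aH k n] := by
  refine (Fintype.linearIndependent_iff (M := H k n ⊗[k] H k n)).mpr fun c hc => ?_
  simp only [Fin.sum_univ_three] at hc
  let coeff (i j p q : Fin 2) : H k n ⊗[k] H k n →ₗ[k] k :=
    LinearMap.mul' k k ∘ₗ TensorProduct.map
      (Matrix.entryLinearMap k k i j ∘ₗ (matrixRep h2n).toLinearMap)
      (Matrix.entryLinearMap k k p q ∘ₗ (matrixRep h2n).toLinearMap)
  have h0 : c 0 = 0 := by simpa [coeff, gMat, bMat] using congrArg (coeff 0 0 1 0) hc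
  have h1 : c 1 = 0 := by simpa [coeff, gMat, bMat] using congrArg (coeff 1 0 0 0) hc
  have h12 : c 1 + c 2 = 0 := by simpa [coeff, gMat, bMat] using congrArg (coeff 0 1 0 0) hc
  have h2 : c 2 = 0 := by linear_combination h12 - h1
  intro i
  fin_cases i
  exacts [h0, h1, h2]

end MatrixRep

end

theorem no_skew_primitive_in_degree_two (n : ℕ) [CharP k 2]
    (h2n : 2 ∣ n)
    (Δ : H k n →ₐ[k] H k n ⊗[k] H k n)
    (ha : Δ (aH k n) = aH k n ⊗ₜ 1 + gH k n ⊗ₜ aH k n)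
    (hb : Δ (bH k n) = bH k n ⊗ₜ 1 + gH k n ⊗ₜ bH k n)
    (lam mu nu : k)
    (hx : Δ (lam • (bH k n * aH k n) + mu • (aH k n * bH k n) + nu • ((bH k n) ^ 2)) =
      (lam • (bH k n * aH k n) + mu • (aH k n * bH k n) + nu • ((bH k n) ^ 2)) ⊗ₜ 1 +
      ((gH k n) ^ 2) ⊗ₜ
        (lam • (bH k n * aH k n) + mu • (aH k n * bH k n) + nu • ((bH k n) ^ 2))) :
    lam = 0 ∧ mu = 0 ∧ nu = 0 := by
  simp only [map_add, map_smul, coproduct_bH_mul_aH ha hb, coproduct_aH_mul_bH ha hb,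
    coproduct_bH_sq hb, add_tmul, tmul_add, ← smul_tmul', tmul_smul] at hx
  have hdefect : (lam + mu + nu) • (gH k n * aH k n) ⊗ₜ[k] bH k n +
      (lam + mu) • (gH k n * bH k n) ⊗ₜ[k] aH k n + lam • (gH k n * aH k n) ⊗ₜ[k] aH k n = 0 := by
    linear_combination (norm := module) hx
  have hc := Fintype.linearIndependent_iff.mp (linearIndependent_gH_mul_tmul h2n)
    ![lam + mu + nu, lam + mu, lam] (by simpa [Fin.sum_univ_three] using hdefect)
  have hlam : lam = 0 := by simpa using hc 2
  have hmu : lam + mu = 0 := by simpa using hc 1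
  have hnu : lam + mu + nu = 0 := by simpa using hc 0
  exact ⟨hlam, by linear_combination hmu - hlam, by linear_combination hnu - hmu⟩
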